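/- Let a_1, …, a_ℓ, C, b be positive integers. Let G be the undirected graph with vertex set {s, t, B_1, …, B_b} and edges sB_j and B_jt for each j ∈ {1,…,b}, together with the edge st; all edges have length 1 and capacity C. Consider the ℓ + 1 demands (s, t, a_1), …, (s, t, a_ℓ) and the dummy demand (s, t, C). Then the following are equivalent: (a) there is, for each demand, a walk from s to t in G that is a concatenation of at most 2 unique-shortest-path segments, such that for every edge e of G the sum of the volumes of the demands whose walk traverses e (counted with multiplicity) is at most C; (b) the multiset {a_1, …, a_ℓ} can be partitioned into b parts (some possibly empty) each of sum at most C. -/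

import Mathlib

/-!
Every vertex of the graph is equal or adjacent to `s` and to `t`, so a walk from `s` to `t` made
of at most two shortest-path segments has length at most two: it is the edge `st` or a path
`s B_k t`. A routing is thus a choice among the `b + 1` routes `Option (Fin b)` for each demand,
and the first edge of a route carries exactly the volume sent along that route. The dummy demand
saturates its own route, so (volumes being positive) no other demand shares it, and the other
`b` routes are the bins of a packing. Conversely, a packing is routed through the `B_k`, with
the dummy on `st`.
-/

/-- The number of occurrences of `a` in the list `l` (counted with multiplicity). -/
noncomputable def cnt {α : Type*} (a : α) (l : List α) : ℕ :=
  letI := Classical.decEq α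
  l.count a

/-- `ConcatUSP G j w`: the walk `w` is a concatenation of (exactly) `j` consecutive
subwalks, each of which is the unique shortest path in `G` between its endpoints. -/
inductive ConcatUSP {V : Type*} (G : SimpleGraph V) : ℕ → ∀ {x y : V}, G.Walk x y → Prop
  | nil {x : V} : ConcatUSP G 0 (SimpleGraph.Walk.nil : G.Walk x x)
  | cons {j : ℕ} {x y z : V} (p : G.Walk x y) (q : G.Walk y z)
      (hp : p.length = G.dist x y)
      (hu : ∀ p' : G.Walk x y, p'.length = G.dist x y → p' = p)
      (hq : ConcatUSP G j q) : ConcatUSP G (j + 1) (p.append q)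

/-- The graph of Statement 9: vertices `s = Sum.inr false`, `t = Sum.inr true` and
`B_1, …, B_b` (encoded `Sum.inl j` for `j : Fin b`), with edges `s B_j`, `B_j t` for every
`j`, and the edge `s t`. -/
def binG (b : ℕ) : SimpleGraph (Fin b ⊕ Bool) where
  Adj x y :=
    match x, y with
    | Sum.inl _, Sum.inr _ => True
    | Sum.inr _, Sum.inl _ => True
    | Sum.inr x, Sum.inr y => x ≠ y
    | Sum.inl _, Sum.inl _ => False
  symm := by
    constructor
    rintro (u | u) (v | v) h
    · exact h
    · trivial
    · trivial
    · exact Ne.symm h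
  loopless := by
    constructor
    rintro (u | u) h
    · exact h
    · exact h rfl

open SimpleGraph

lemma cnt_eq_count {α : Type*} [DecidableEq α] (a : α) (l : List α) : cnt a l = l.count a := by
  unfold cnt
  congr
  exact Subsingleton.elim _ _

namespace SimpleGraph.Walk

variable {V : Type*} {G : SimpleGraph V} {u v : V}

lemma eq_toWalk_of_length_eq_one (p : G.Walk u v) (h : p.length = 1) :
    p = (p.adj_of_length_eq_one h).toWalk := by
  cases p with
  | nil => simp at h
  | cons _ q => cases q with
    | nil => rfl
    | cons _ _ => simp at h

end SimpleGraph.Walk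

lemma ConcatUSP.cons_adj {V : Type*} {G : SimpleGraph V} {j : ℕ} {u v w : V}
    (h : G.Adj u v) {q : G.Walk v w} (hq : ConcatUSP G j q) :
    ConcatUSP G (j + 1) (Walk.cons h q) := by
  have hd : G.dist u v = 1 := dist_eq_one_iff_adj.mpr h
  exact ConcatUSP.cons h.toWalk q (by simp [hd])
    (fun p hp => p.eq_toWalk_of_length_eq_one (hp.trans hd)) hq

section Routing

variable {ι R : Type*} [Fintype ι] [DecidableEq R]

def routeLoad (a : ι → ℕ) (C : ℕ) (r : ι → R) (rd o : R) : ℕ :=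
  (∑ i with r i = o, a i) + if rd = o then C else 0

lemma ne_of_routeLoad_le {a : ι → ℕ} (ha : ∀ i, 0 < a i) {C : ℕ} {r : ι → R} {rd : R}
    (h : routeLoad a C r rd rd ≤ C) (i : ι) : r i ≠ rd := by
  intro hi
  have hsum : ∑ i with r i = rd, a i = 0 := by simp only [routeLoad, if_pos] at h; omega
  exact (ha i).ne' (Finset.sum_eq_zero_iff.mp hsum i (by simp [hi]))

end Routing

theorem exists_routeLoad_le_iff_exists_bins {ι : Type*} [Fintype ι] {b C : ℕ} (d : Fin b)
    (a : ι → ℕ) (ha : ∀ i, 0 < a i) :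
    (∃ (r : ι → Option (Fin b)) (rd : Option (Fin b)), ∀ o, routeLoad a C r rd o ≤ C) ↔
      ∃ f : ι → Fin b, ∀ j, ∑ i with f i = j, a i ≤ C := by
  constructor
  · rintro ⟨r, rd, hload⟩
    have hne := ne_of_routeLoad_le ha (hload rd)
    -- bin `j` is the route `some j`, or `none` if the dummy takes `some j`
    let bin (j : Fin b) : Option (Fin b) := if rd = some j then none else some j
    have hbin : ∀ i j, (r i).getD (rd.getD d) = j → r i = bin j := by
      intro i j
      have hi := hne i
      cases hr : r i <;> cases rd <;> grind
    refine ⟨fun i => (r i).getD (rd.getD d), fun j => ?_⟩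
    calc ∑ i with (r i).getD (rd.getD d) = j, a i
        ≤ ∑ i with r i = bin j, a i :=
          Finset.sum_le_sum_of_subset (Finset.monotone_filter_right _ fun i _ => hbin i j)
      _ ≤ routeLoad a C r rd (bin j) := Nat.le_add_right _ _
      _ ≤ C := hload _
  · rintro ⟨f, hf⟩
    refine ⟨fun i => some (f i), none, fun o => ?_⟩
    cases o with
    | none => simp [routeLoad]
    | some j => simpa [routeLoad] using hf j

namespace binG

variable {b : ℕ}

abbrev s : Fin b ⊕ Bool := Sum.inr false
abbrev t : Fin b ⊕ Bool := Sum.inr true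

lemma adj_s_t : (binG b).Adj s t := Bool.false_ne_true

lemma adj_inr_inl (c : Bool) (k : Fin b) : (binG b).Adj (Sum.inr c) (Sum.inl k) := trivial

lemma adj_inl_inr (k : Fin b) (c : Bool) : (binG b).Adj (Sum.inl k) (Sum.inr c) := trivial

lemma dist_inr_le_one (c : Bool) (y : Fin b ⊕ Bool) : (binG b).dist (Sum.inr c) y ≤ 1 := by
  by_cases hy : Sum.inr c = y
  · simp [hy]
  · refine (dist_eq_one_iff_adj.mpr ?_).le
    rcases y with k | c'
    · exact adj_inr_inl c k
    · exact fun h => hy (congrArg Sum.inr h)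

/-- The `s`–`t` walk along the edge `st` (`none`) or through `B_k` (`some k`). -/
def stWalk : Option (Fin b) → (binG b).Walk s t
  | none => adj_s_t.toWalk
  | some k => Walk.cons (adj_inr_inl false k) (adj_inl_inr k true).toWalk

lemma concatUSP_stWalk (o : Option (Fin b)) : ∃ j ≤ 2, ConcatUSP (binG b) j (stWalk o) := by
  cases o with
  | none => exact ⟨1, by norm_num, .cons_adj _ .nil⟩
  | some k => exact ⟨2, le_rfl, .cons_adj _ (.cons_adj _ .nil)⟩

lemma length_le_two_of_concatUSP {j : ℕ} (hj : j ≤ 2) {W : (binG b).Walk s t}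
    (hW : ConcatUSP (binG b) j W) : W.length ≤ 2 := by
  obtain _ | ⟨p, q, hp, -, hq⟩ := hW
  rename_i y
  have hqt : q.length ≤ 1 := by
    obtain _ | ⟨p', q', hp', -, hq'⟩ := hq
    · simp
    · obtain _ | _ := hq'
      · rw [Walk.append_nil, hp', dist_comm]
        exact dist_inr_le_one true _
      · omega
  rw [Walk.length_append, hp]
  linarith [dist_inr_le_one false y]

lemma eq_stWalk_of_length_le_two (W : (binG b).Walk s t) (hW : W.length ≤ 2) :
    ∃ o, W = stWalk o := by
  match W, hW with
  | .cons _ .nil, _ => exact ⟨none, rfl⟩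
  | .cons (v := .inl k) _ (.cons _ .nil), _ => exact ⟨some k, rfl⟩
  | .cons (v := .inr c) h (.cons h' .nil), _ => cases c; exacts [(h rfl).elim, (h' rfl).elim]
  | .cons _ (.cons _ (.cons _ _)), hW => simp at hW

def routeEdge : Option (Fin b) → Sym2 (Fin b ⊕ Bool)
  | none => s(s, t)
  | some k => s(s, Sum.inl k)

lemma routeEdge_mem_edgeSet (o : Option (Fin b)) : routeEdge o ∈ (binG b).edgeSet := by
  cases o with
  | none => exact adj_s_t (b := b)
  | some k => exact adj_inr_inl false k

lemma cnt_routeEdge_edges_stWalk (o o' : Option (Fin b)) :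
    cnt (routeEdge o') (stWalk o).edges = if o = o' then 1 else 0 := by
  cases o <;> cases o' <;> simp [cnt_eq_count, routeEdge, stWalk, List.count_cons]

lemma exists_cnt_edges_stWalk {e : Sym2 (Fin b ⊕ Bool)} (he : e ∈ (binG b).edgeSet) :
    ∃ o', ∀ o, cnt e (stWalk o).edges = if o = o' then 1 else 0 := by
  induction e using Sym2.ind with | _ x y => ?_
  rcases x with k | c <;> rcases y with k' | c'
  · exact he.elim
  · refine ⟨some k, fun o => ?_⟩
    cases o <;> cases c' <;> simp [cnt_eq_count, stWalk, List.count_cons, Sym2.eq_swap]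
  · refine ⟨some k', fun o => ?_⟩
    cases o <;> cases c <;> simp [cnt_eq_count, stWalk, List.count_cons, Sym2.eq_swap]
  · refine ⟨none, fun o => ?_⟩
    cases o <;> cases c <;> cases c' <;> simp_all [cnt_eq_count, stWalk, Sym2.eq_swap]

lemma exists_eq_stWalk_of_concatUSP {j : ℕ} (hj : j ≤ 2) {W : (binG b).Walk s t}
    (hW : ConcatUSP (binG b) j W) : ∃ o, W = stWalk o :=
  eq_stWalk_of_length_le_two W (length_le_two_of_concatUSP hj hW)

lemma load_stWalk_eq_routeLoad {ι : Type*} [Fintype ι] (a : ι → ℕ) (C : ℕ)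
    (r : ι → Option (Fin b)) (rd : Option (Fin b)) {e : Sym2 (Fin b ⊕ Bool)} {o : Option (Fin b)}
    (he : ∀ o', cnt e (stWalk o').edges = if o' = o then 1 else 0) :
    (∑ i, a i * cnt e (stWalk (r i)).edges) + C * cnt e (stWalk rd).edges =
      routeLoad a C r rd o := by
  simp [he, routeLoad, Finset.sum_filter]

end binG

open binG

theorem stmt9_general (ℓ b C : ℕ) (hb : 0 < b)
    (a : Fin ℓ → ℕ) (ha : ∀ i, 0 < a i) :
    (∃ (W : Fin ℓ → (binG b).Walk (Sum.inr false) (Sum.inr true))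
       (Wd : (binG b).Walk (Sum.inr false) (Sum.inr true)),
      (∀ i, ∃ j ≤ 2, ConcatUSP (binG b) j (W i)) ∧
      (∃ j ≤ 2, ConcatUSP (binG b) j Wd) ∧
      (∀ e ∈ (binG b).edgeSet,
        (∑ i : Fin ℓ, a i * cnt e (W i).edges) + C * cnt e Wd.edges ≤ C)) ↔
    (∃ f : Fin ℓ → Fin b,
      ∀ j : Fin b, (∑ i ∈ Finset.univ.filter (fun i => f i = j), a i) ≤ C) := by
  rw [← exists_routeLoad_le_iff_exists_bins ⟨0, hb⟩ a ha]
  constructor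
  · rintro ⟨W, Wd, hW, ⟨jd, hjd, hWd⟩, hcap⟩
    choose r hr using fun i => (hW i).elim fun _ ⟨hj, h⟩ => exists_eq_stWalk_of_concatUSP hj h
    obtain ⟨rd, rfl⟩ := exists_eq_stWalk_of_concatUSP hjd hWd
    refine ⟨r, rd, fun o => ?_⟩
    rw [← load_stWalk_eq_routeLoad a C r rd (cnt_routeEdge_edges_stWalk · o)]
    simpa only [hr] using hcap _ (routeEdge_mem_edgeSet o)
  · rintro ⟨r, rd, hload⟩
    refine ⟨fun i => stWalk (r i), stWalk rd, fun i => concatUSP_stWalk _, concatUSP_stWalk _,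
      fun e he => ?_⟩
    obtain ⟨o, ho⟩ := exists_cnt_edges_stWalk he
    exact (load_stWalk_eq_routeLoad a C r rd ho).trans_le (hload o)

/-- with all edges of capacity `C`, the demands `(s, t, a_1), …, (s, t, a_ℓ)`
together with the dummy demand `(s, t, C)` can each be routed along a walk from `s` to `t`
that is a concatenation of at most 2 unique-shortest-path segments, so that on every edge
the total routed volume is at most `C`, iff the multiset `{a_1, …, a_ℓ}` can be partitioned
into `b` (possibly empty) parts each of sum at most `C`. -/
theorem stmt9 (ℓ b C : ℕ) (hb : 0 < b) (hC : 0 < C)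
    (a : Fin ℓ → ℕ) (ha : ∀ i, 0 < a i) :
    (∃ (W : Fin ℓ → (binG b).Walk (Sum.inr false) (Sum.inr true))
       (Wd : (binG b).Walk (Sum.inr false) (Sum.inr true)),
      (∀ i, ∃ j ≤ 2, ConcatUSP (binG b) j (W i)) ∧
      (∃ j ≤ 2, ConcatUSP (binG b) j Wd) ∧
      (∀ e ∈ (binG b).edgeSet,
        (∑ i : Fin ℓ, a i * cnt e (W i).edges) + C * cnt e Wd.edges ≤ C)) ↔
    (∃ f : Fin ℓ → Fin b,
      ∀ j : Fin b, (∑ i ∈ Finset.univ.filter (fun i => f i = j), a i) ≤ C) :=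
  stmt9_general ℓ b C hb a ha
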